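/- Let q : ℝ⁶ → ℝ be of class C³ and constant outside a compact set, let f(u) := |u|u and f'(u) := 2|u|, and define the operator A by (Ah)(x) := (1/3)Δq(x)·h(x) + ∇q(x)·∇h(x). Then for all h₁, h₂ ∈ C_c^∞(ℝ⁶): ∫_{ℝ⁶} (Ah₁)·( f(h₁+h₂) − f(h₁) − f'(h₁)h₂ ) dx = −∫_{ℝ⁶} (Ah₂)·( f(h₁+h₂) − f(h₁) ) dx. (In particular, taking h₂ = 0 inside the proof one uses ∫ ( (1/3)Δq·h + ∇q·∇h )·f(h) dx = 0, which follows from h·f(h) = 3F(h) and ∇h·f(h) = ∇F(h) with F(h) = |h|³/3.) -/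

import Mathlib

open MeasureTheory
open scoped RealInnerProductSpace

noncomputable section

/-- Six-dimensional Euclidean space. -/
abbrev E6 := EuclideanSpace ℝ (Fin 6)

/-- The (pointwise) Laplacian of a function on `ℝ⁶`, as the sum of second
directional derivatives along the coordinate directions. -/
def lap6 (f : E6 → ℝ) (x : E6) : ℝ :=
  ∑ i : Fin 6,
    fderiv ℝ (fun y => fderiv ℝ f y (EuclideanSpace.single i 1)) x
      (EuclideanSpace.single i 1)

/-- The virial operator `A h = (1/3)Δq·h + ∇q·∇h` built from the weight `q`. -/
def Aop (q h : E6 → ℝ) (x : E6) : ℝ :=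
  (1 / 3) * lap6 q x * h x + ⟪gradient q x, gradient h x⟫

/-- The nonlinearity `f(u) = |u|·u`. -/
def fNL (u : ℝ) : ℝ := |u| * u

/-- Its derivative `f'(u) = 2|u|`. -/
def fNL' (u : ℝ) : ℝ := 2 * |u|


def FNL (u : ℝ) : ℝ := |u| * u * u / 3

lemma hasDerivAt_fNL (u : ℝ) : HasDerivAt fNL (fNL' u) u := by
  rcases lt_trichotomy u 0 with hu | rfl | hu
  · have h : HasDerivAt (fun v : ℝ => -(v * v)) (fNL' u) u := by
      have : HasDerivAt (fun v : ℝ => -(v * v)) (-(1 * u + u * 1)) u :=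
        ((hasDerivAt_id' u).mul (hasDerivAt_id' u)).neg
      convert this using 1
      simp [fNL', abs_of_neg hu]; ring
    refine h.congr_of_eventuallyEq ?_
    filter_upwards [eventually_lt_nhds hu] with v hv
    simp [fNL, abs_of_neg hv, mul_comm]
  · rw [hasDerivAt_iff_isLittleO]
    have : (fun v : ℝ => |v| * v) =o[nhds 0] fun v => v := by
      rw [Asymptotics.isLittleO_iff]
      intro c hc
      filter_upwards [Metric.ball_mem_nhds (0:ℝ) hc] with v hv
      rw [Real.norm_eq_abs, Real.norm_eq_abs, abs_mul, abs_abs]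
      rw [Metric.mem_ball, Real.dist_eq, sub_zero] at hv
      nlinarith [abs_nonneg v]
    simpa [fNL, fNL'] using this
  · have h : HasDerivAt (fun v : ℝ => v * v) (fNL' u) u := by
      have : HasDerivAt (fun v : ℝ => v * v) (1 * u + u * 1) u :=
        (hasDerivAt_id' u).mul (hasDerivAt_id' u)
      convert this using 1
      simp [fNL', abs_of_pos hu]; ring
    refine h.congr_of_eventuallyEq ?_
    filter_upwards [eventually_gt_nhds hu] with v hv
    simp [fNL, abs_of_pos hv]

lemma hasDerivAt_FNL (u : ℝ) : HasDerivAt FNL (fNL u) u := by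
  rcases lt_trichotomy u 0 with hu | rfl | hu
  · have h : HasDerivAt (fun v : ℝ => -(v ^ 3) / 3) (fNL u) u := by
      have : HasDerivAt (fun v : ℝ => -(v ^ 3) / 3) (-(((3:ℕ):ℝ) * u ^ (3 - 1)) / 3) u :=
        ((hasDerivAt_pow 3 u).neg).div_const 3
      convert this using 1
      simp [fNL, abs_of_neg hu]; ring
    refine h.congr_of_eventuallyEq ?_
    filter_upwards [eventually_lt_nhds hu] with v hv
    simp [FNL, abs_of_neg hv]; ring
  · rw [hasDerivAt_iff_isLittleO]
    have : (fun v : ℝ => |v| * v * v / 3) =o[nhds 0] fun v => v := by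
      rw [Asymptotics.isLittleO_iff]
      intro c hc
      filter_upwards [Metric.ball_mem_nhds (0:ℝ) (lt_min one_pos hc)] with v hv
      rw [Real.norm_eq_abs, Real.norm_eq_abs, abs_div, abs_mul, abs_mul, abs_abs, show |(3:ℝ)| = 3 by norm_num]
      rw [Metric.mem_ball, Real.dist_eq, sub_zero] at hv
      have h1 : |v| < 1 := lt_of_lt_of_le hv (min_le_left _ _)
      have h2 : |v| < c := lt_of_lt_of_le hv (min_le_right _ _)
      have h0 : (0:ℝ) ≤ |v| := abs_nonneg v
      nlinarith
    simpa [FNL, fNL] using this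
  · have h : HasDerivAt (fun v : ℝ => v ^ 3 / 3) (fNL u) u := by
      have : HasDerivAt (fun v : ℝ => v ^ 3 / 3) (((3:ℕ):ℝ) * u ^ (3 - 1) / 3) u :=
        (hasDerivAt_pow 3 u).div_const 3
      convert this using 1
      simp [fNL, abs_of_pos hu]; ring
    refine h.congr_of_eventuallyEq ?_
    filter_upwards [eventually_gt_nhds hu] with v hv
    simp [FNL, abs_of_pos hv]; ring

lemma continuous_fNL : Continuous fNL := continuous_abs.mul continuous_id
lemma continuous_fNL' : Continuous fNL' := continuous_const.mul continuous_abs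
lemma fNL_zero : fNL 0 = 0 := by simp [fNL]
lemma FNL_zero : FNL 0 = 0 := by simp [FNL]

lemma inner_gradient (g : E6 → ℝ) (x v : E6) : ⟪gradient g x, v⟫ = fderiv ℝ g x v :=
  InnerProductSpace.toDual_symm_apply

lemma gradient_apply_coord (g : E6 → ℝ) (x : E6) (i : Fin 6) :
    gradient g x i = fderiv ℝ g x (EuclideanSpace.single i 1) := by
  rw [← inner_gradient g x (EuclideanSpace.single i 1)]
  rw [EuclideanSpace.inner_single_right]; simp

lemma div_int_zero (q : E6 → ℝ) (hq : ContDiff ℝ 3 q) (G : E6 → ℝ)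
    (hG : Differentiable ℝ G) (hG' : Continuous fun x => fderiv ℝ G x)
    (hGc : HasCompactSupport G) :
    ∫ x : E6, (lap6 q x * G x + ⟪gradient q x, gradient G x⟫) = 0 := by
  have hq1 : ContDiff ℝ 2 (fun y => fderiv ℝ q y) := hq.fderiv_right (by norm_num)
  set e : Fin 6 → E6 := fun i => EuclideanSpace.single i 1 with he
  have key : ∀ i : Fin 6,
      Integrable (fun x : E6 => fderiv ℝ (fun y => fderiv ℝ q y (e i)) x (e i) * G x
          + fderiv ℝ q x (e i) * fderiv ℝ G x (e i)) ∧
      ∫ x : E6, (fderiv ℝ (fun y => fderiv ℝ q y (e i)) x (e i) * G x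
          + fderiv ℝ q x (e i) * fderiv ℝ G x (e i)) = 0 := by
    intro i
    have hqi : ContDiff ℝ 2 (fun y => fderiv ℝ q y (e i)) := hq1.clm_apply contDiff_const
    have hqi' : Continuous (fun x => fderiv ℝ (fun y => fderiv ℝ q y (e i)) x (e i)) :=
      ((hqi.fderiv_right (m := 1) (by norm_num)).continuous).clm_apply continuous_const
    have hGi : HasCompactSupport (fun x => fderiv ℝ G x (e i)) :=
      (hGc.fderiv ℝ).comp_left (g := fun L : E6 →L[ℝ] ℝ => L (e i)) (by simp)
    have I1 : Integrable (fun x : E6 => fderiv ℝ (fun y => fderiv ℝ q y (e i)) x (e i) * G x) :=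
      (hqi'.mul hG.continuous).integrable_of_hasCompactSupport hGc.mul_left
    have I2 : Integrable (fun x : E6 => fderiv ℝ q x (e i) * fderiv ℝ G x (e i)) :=
      ((hqi.continuous).mul (hG'.clm_apply continuous_const)).integrable_of_hasCompactSupport
        hGi.mul_left
    have I3 : Integrable (fun x : E6 => fderiv ℝ q x (e i) * G x) :=
      ((hqi.continuous).mul hG.continuous).integrable_of_hasCompactSupport hGc.mul_left
    have hIBP := integral_mul_fderiv_eq_neg_fderiv_mul_of_integrable I1 I2 I3
      (fun x _ => hqi.differentiable (by norm_num) x) (fun x _ => hG x)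
    refine ⟨I1.add I2, ?_⟩
    rw [integral_add I1 I2, hIBP]
    ring
  have hsum : (fun x : E6 => lap6 q x * G x + ⟪gradient q x, gradient G x⟫)
      = fun x : E6 => ∑ i : Fin 6, (fderiv ℝ (fun y => fderiv ℝ q y (e i)) x (e i) * G x
          + fderiv ℝ q x (e i) * fderiv ℝ G x (e i)) := by
    funext x
    rw [Finset.sum_add_distrib]
    congr 1
    · rw [lap6, Finset.sum_mul]
    · have : ⟪gradient q x, gradient G x⟫
          = ∑ i : Fin 6, gradient q x i * gradient G x i := by
        rw [PiLp.inner_apply]; simp only [RCLike.inner_apply, conj_trivial]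
        exact Finset.sum_congr rfl fun i _ => mul_comm _ _
      rw [this]
      exact Finset.sum_congr rfl fun i _ => by
        rw [gradient_apply_coord, gradient_apply_coord, he]
  rw [hsum, integral_finset_sum _ (fun i _ => (key i).1)]
  exact Finset.sum_eq_zero fun i _ => (key i).2

lemma hcs_sub {f g : E6 → ℝ} (hf : HasCompactSupport f) (hg : HasCompactSupport g) :
    HasCompactSupport (fun x => f x - g x) := by
  have := hf.add (hg.comp_left (g := fun t : ℝ => -t) neg_zero)
  exact hf.sub hg

section main
variable (q h₁ h₂ : E6 → ℝ)

def Gfun : E6 → ℝ := fun x => FNL (h₁ x + h₂ x) - FNL (h₁ x) - fNL (h₁ x) * h₂ x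

lemma Gfun_hasFDerivAt (h₁d : Differentiable ℝ h₁) (h₂d : Differentiable ℝ h₂) (x : E6) :
    HasFDerivAt (Gfun h₁ h₂)
      (fNL (h₁ x + h₂ x) • (fderiv ℝ h₁ x + fderiv ℝ h₂ x) - fNL (h₁ x) • fderiv ℝ h₁ x
        - (fNL (h₁ x) • fderiv ℝ h₂ x + h₂ x • (fNL' (h₁ x) • fderiv ℝ h₁ x))) x := by
  have H1 := (h₁d x).hasFDerivAt
  have H2 := (h₂d x).hasFDerivAt
  have A1 : HasFDerivAt (fun y => FNL (h₁ y + h₂ y))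
      (fNL (h₁ x + h₂ x) • (fderiv ℝ h₁ x + fderiv ℝ h₂ x)) x :=
    (hasDerivAt_FNL (h₁ x + h₂ x)).comp_hasFDerivAt (f := fun y => h₁ y + h₂ y) x (H1.add H2)
  have A2 : HasFDerivAt (fun y => FNL (h₁ y)) (fNL (h₁ x) • fderiv ℝ h₁ x) x :=
    (hasDerivAt_FNL (h₁ x)).comp_hasFDerivAt x H1
  have A3 : HasFDerivAt (fun y => fNL (h₁ y) * h₂ y)
      (fNL (h₁ x) • fderiv ℝ h₂ x + h₂ x • (fNL' (h₁ x) • fderiv ℝ h₁ x)) x :=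
    ((hasDerivAt_fNL (h₁ x)).comp_hasFDerivAt x H1).mul H2
  exact (A1.sub A2).sub A3

lemma Gfun_diff (h₁d : Differentiable ℝ h₁) (h₂d : Differentiable ℝ h₂) :
    Differentiable ℝ (Gfun h₁ h₂) :=
  fun x => (Gfun_hasFDerivAt h₁ h₂ h₁d h₂d x).differentiableAt

lemma Gfun_fderiv_cont (h₁sm : ContDiff ℝ (⊤ : ℕ∞) h₁) (h₂sm : ContDiff ℝ (⊤ : ℕ∞) h₂) :
    Continuous fun x => fderiv ℝ (Gfun h₁ h₂) x := by
  have h₁d := h₁sm.differentiable (by simp)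
  have h₂d := h₂sm.differentiable (by simp)
  have heq : (fun x => fderiv ℝ (Gfun h₁ h₂) x)
      = fun x => fNL (h₁ x + h₂ x) • (fderiv ℝ h₁ x + fderiv ℝ h₂ x)
          - fNL (h₁ x) • fderiv ℝ h₁ x
          - (fNL (h₁ x) • fderiv ℝ h₂ x + h₂ x • (fNL' (h₁ x) • fderiv ℝ h₁ x)) :=
    funext fun x => (Gfun_hasFDerivAt h₁ h₂ h₁d h₂d x).fderiv
  rw [heq]
  have c1 : Continuous fun x => fderiv ℝ h₁ x := h₁sm.continuous_fderiv (by simp)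
  have c2 : Continuous fun x => fderiv ℝ h₂ x := h₂sm.continuous_fderiv (by simp)
  exact (((continuous_fNL.comp (h₁sm.continuous.add h₂sm.continuous)).smul (c1.add c2)).sub
      ((continuous_fNL.comp h₁sm.continuous).smul c1)).sub
    (((continuous_fNL.comp h₁sm.continuous).smul c2).add
      (h₂sm.continuous.smul ((continuous_fNL'.comp h₁sm.continuous).smul c1)))

lemma Gfun_compact (h₁c : HasCompactSupport h₁) (h₂c : HasCompactSupport h₂) :
    HasCompactSupport (Gfun h₁ h₂) := by
  have c1 : HasCompactSupport (fun x => FNL (h₁ x + h₂ x)) :=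
    (h₁c.add h₂c).comp_left (g := FNL) FNL_zero
  have c2 : HasCompactSupport (fun x => FNL (h₁ x)) := h₁c.comp_left (g := FNL) FNL_zero
  have c3 : HasCompactSupport (fun x => fNL (h₁ x) * h₂ x) := h₂c.mul_left
  exact hcs_sub (hcs_sub c1 c2) c3

lemma continuous_gradient (g : E6 → ℝ) (hg : Continuous fun x => fderiv ℝ g x) :
    Continuous fun x => gradient g x := by
  show Continuous fun x => (InnerProductSpace.toDual ℝ E6).symm (fderiv ℝ g x)
  exact (InnerProductSpace.toDual ℝ E6).symm.continuous.comp hg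

lemma continuous_lap6 (hq : ContDiff ℝ 3 q) : Continuous (lap6 q) := by
  have hq1 : ContDiff ℝ 2 (fun y => fderiv ℝ q y) := hq.fderiv_right (by norm_num)
  unfold lap6
  apply continuous_finset_sum
  intro i _
  exact ((((hq1.clm_apply contDiff_const).fderiv_right (m := 1)
    (by norm_num)).continuous).clm_apply continuous_const)

lemma continuous_Aop (hq : ContDiff ℝ 3 q) (hh : ContDiff ℝ (⊤ : ℕ∞) h₁) :
    Continuous (Aop q h₁) := by
  unfold Aop
  exact ((continuous_const.mul (continuous_lap6 q hq)).mul hh.continuous).add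
    ((continuous_gradient q (hq.continuous_fderiv (by norm_num))).inner
      (continuous_gradient h₁ (hh.continuous_fderiv (by simp))))

end main


/-- The virial integration-by-parts identity: for `q` of class `C³` constant outside
a compact set, and `h₁, h₂ ∈ C_c^∞(ℝ⁶)`,
`∫ (Ah₁)(f(h₁+h₂) − f(h₁) − f'(h₁)h₂) = −∫ (Ah₂)(f(h₁+h₂) − f(h₁))`. -/
theorem stmt8 (q : E6 → ℝ) (hq : ContDiff ℝ 3 q)
    (hconst : ∃ (c₀ : ℝ) (K : Set E6), IsCompact K ∧ ∀ x ∉ K, q x = c₀)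
    (h₁ h₂ : E6 → ℝ)
    (h₁sm : ContDiff ℝ (⊤ : ℕ∞) h₁) (h₁c : HasCompactSupport h₁)
    (h₂sm : ContDiff ℝ (⊤ : ℕ∞) h₂) (h₂c : HasCompactSupport h₂) :
    (∫ x : E6, Aop q h₁ x * (fNL (h₁ x + h₂ x) - fNL (h₁ x) - fNL' (h₁ x) * h₂ x))
      = -∫ x : E6, Aop q h₂ x * (fNL (h₁ x + h₂ x) - fNL (h₁ x)) := by
  have h₁d : Differentiable ℝ h₁ := h₁sm.differentiable (by simp)
  have h₂d : Differentiable ℝ h₂ := h₂sm.differentiable (by simp)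
  set G : E6 → ℝ := Gfun h₁ h₂ with hGdef
  -- pointwise identity
  have hpt : ∀ x : E6,
      Aop q h₁ x * (fNL (h₁ x + h₂ x) - fNL (h₁ x) - fNL' (h₁ x) * h₂ x)
        + Aop q h₂ x * (fNL (h₁ x + h₂ x) - fNL (h₁ x))
      = lap6 q x * G x + ⟪gradient q x, gradient G x⟫ := by
    intro x
    have e1 : ⟪gradient q x, gradient h₁ x⟫ = fderiv ℝ h₁ x (gradient q x) := by
      rw [real_inner_comm]; exact inner_gradient _ _ _
    have e2 : ⟪gradient q x, gradient h₂ x⟫ = fderiv ℝ h₂ x (gradient q x) := by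
      rw [real_inner_comm]; exact inner_gradient _ _ _
    have eG : ⟪gradient q x, gradient G x⟫ = fderiv ℝ G x (gradient q x) := by
      rw [real_inner_comm]; exact inner_gradient _ _ _
    rw [Aop, Aop, e1, e2, eG, hGdef, (Gfun_hasFDerivAt h₁ h₂ h₁d h₂d x).fderiv]
    simp only [ContinuousLinearMap.sub_apply, ContinuousLinearMap.add_apply,
      ContinuousLinearMap.smul_apply, smul_eq_mul, Gfun, fNL, fNL', FNL]
    ring
  -- integrability
  have wcont1 : Continuous fun x => fNL (h₁ x + h₂ x) - fNL (h₁ x) - fNL' (h₁ x) * h₂ x :=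
    ((continuous_fNL.comp (h₁sm.continuous.add h₂sm.continuous)).sub
      (continuous_fNL.comp h₁sm.continuous)).sub
      ((continuous_fNL'.comp h₁sm.continuous).mul h₂sm.continuous)
  have wsupp1 : HasCompactSupport
      fun x => fNL (h₁ x + h₂ x) - fNL (h₁ x) - fNL' (h₁ x) * h₂ x := by
    have c1 : HasCompactSupport (fun x => fNL (h₁ x + h₂ x)) :=
      (h₁c.add h₂c).comp_left (g := fNL) fNL_zero
    have c2 : HasCompactSupport (fun x => fNL (h₁ x)) := h₁c.comp_left (g := fNL) fNL_zero
    have c3 : HasCompactSupport (fun x => fNL' (h₁ x) * h₂ x) := h₂c.mul_left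
    exact hcs_sub (hcs_sub c1 c2) c3
  have wcont2 : Continuous fun x => fNL (h₁ x + h₂ x) - fNL (h₁ x) :=
    (continuous_fNL.comp (h₁sm.continuous.add h₂sm.continuous)).sub
      (continuous_fNL.comp h₁sm.continuous)
  have wsupp2 : HasCompactSupport fun x => fNL (h₁ x + h₂ x) - fNL (h₁ x) :=
    hcs_sub ((h₁c.add h₂c).comp_left (g := fNL) fNL_zero) (h₁c.comp_left (g := fNL) fNL_zero)
  have hPint : Integrable
      (fun x : E6 => Aop q h₁ x * (fNL (h₁ x + h₂ x) - fNL (h₁ x) - fNL' (h₁ x) * h₂ x)) :=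
    ((continuous_Aop q h₁ hq h₁sm).mul wcont1).integrable_of_hasCompactSupport wsupp1.mul_left
  have hQint : Integrable
      (fun x : E6 => Aop q h₂ x * (fNL (h₁ x + h₂ x) - fNL (h₁ x))) :=
    ((continuous_Aop q h₂ hq h₂sm).mul wcont2).integrable_of_hasCompactSupport wsupp2.mul_left
  have hzero : ∫ x : E6,
      (Aop q h₁ x * (fNL (h₁ x + h₂ x) - fNL (h₁ x) - fNL' (h₁ x) * h₂ x)
        + Aop q h₂ x * (fNL (h₁ x + h₂ x) - fNL (h₁ x))) = 0 := by
    rw [show (fun x : E6 =>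
        Aop q h₁ x * (fNL (h₁ x + h₂ x) - fNL (h₁ x) - fNL' (h₁ x) * h₂ x)
          + Aop q h₂ x * (fNL (h₁ x + h₂ x) - fNL (h₁ x)))
        = fun x : E6 => lap6 q x * G x + ⟪gradient q x, gradient G x⟫ from funext hpt]
    exact div_int_zero q hq G (Gfun_diff h₁ h₂ h₁d h₂d)
      (Gfun_fderiv_cont h₁ h₂ h₁sm h₂sm) (Gfun_compact h₁ h₂ h₁c h₂c)
  rw [integral_add hPint hQint] at hzero
  linarith
end
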